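/- arXiv:1711.01887 — 4 statements merged into one kernel-verified Lean document; each statement's English description precedes it below -/
import Mathlib

section
/- Let k ≥ 1 and N ≥ 0 be integers and let a_1, …, a_k be distinct nonzero complex numbers. For 1 ≤ i ≤ k(N+1) write i = ī·k + i̲ with integers 0 ≤ ī ≤ N and 1 ≤ i̲ ≤ k. Then the k(N+1) × k(N+1) complex matrix A with entries A_{ij} = a_{i̲}^j · j^{ī} (for 1 ≤ i, j ≤ k(N+1)) is invertible. -/
open Polynomial Finset in
/-- Generalized Vandermonde lemma (Lemma 5.1): for distinct nonzero complex numbers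
`a 1, …, a k` and `N ≥ 0`, the `k(N+1) × k(N+1)` matrix with entries
`A i j = a_{i̲} ^ j * j ^ ī` (indices `1 ≤ i, j ≤ k(N+1)`, `i = ī·k + i̲`,
`0 ≤ ī ≤ N`, `1 ≤ i̲ ≤ k`) is invertible.  Here we use zero-based indices
`i, j : Fin (k*(N+1))` standing for `i+1, j+1`; then `i̲ = i % k + 1` and
`ī = i / k`. -/
theorem generalized_vandermonde_invertible
    (k N : ℕ) (hk : 0 < k) (a : Fin k → ℂ)
    (ha : ∀ i, a i ≠ 0) (hinj : Function.Injective a) :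
    IsUnit (Matrix.of (fun i j : Fin (k * (N + 1)) =>
      (a ⟨i.val % k, Nat.mod_lt _ hk⟩) ^ (j.val + 1) *
        ((j.val + 1 : ℕ) : ℂ) ^ (i.val / k))) := by
  set M := k * (N + 1) with hM
  rw [Matrix.isUnit_iff_isUnit_det, isUnit_iff_ne_zero]
  intro hdet
  obtain ⟨v, hv, hmul⟩ := Matrix.exists_mulVec_eq_zero_iff.2 hdet
  -- the basic vanishing conditions
  have hcond : ∀ (s : Fin k) (r : ℕ), r ≤ N →
      ∑ j : Fin M, a s ^ (j.val + 1) * ((j.val + 1 : ℕ) : ℂ) ^ r * v j = 0 := by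
    intro s r hr
    have hlt : r * k + s.val < M := by
      have h1 : r * k + s.val < (r + 1) * k := by rw [add_mul, one_mul]; omega
      have h2 : (r + 1) * k ≤ (N + 1) * k := Nat.mul_le_mul_right k (by omega)
      have h3 : (N + 1) * k = M := by rw [hM, Nat.mul_comm]
      omega
    have := congrFun hmul ⟨r * k + s.val, hlt⟩
    have hmod : (r * k + s.val) % k = s.val := by
      rw [Nat.mul_comm, Nat.mul_add_mod, Nat.mod_eq_of_lt s.isLt]
    have hdiv : (r * k + s.val) / k = r := by
      rw [Nat.mul_comm, Nat.mul_add_div hk, Nat.div_eq_of_lt s.isLt, add_zero]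
    simpa [Matrix.mulVec, dotProduct, hmod, hdiv, Fin.eta] using this
  -- the vanishing conditions for an arbitrary polynomial of degree ≤ N
  have key : ∀ (s : Fin k) (f : ℂ[X]), f.natDegree ≤ N →
      ∑ j : Fin M, a s ^ (j.val + 1) * f.eval ((j.val + 1 : ℕ) : ℂ) * v j = 0 := by
    intro s f hf
    have h1 : ∀ j : Fin M, a s ^ (j.val + 1) * f.eval ((j.val + 1 : ℕ) : ℂ) * v j
        = ∑ r ∈ Finset.range (N + 1),
            f.coeff r * (a s ^ (j.val + 1) * ((j.val + 1 : ℕ) : ℂ) ^ r * v j) := by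
      intro j
      rw [Polynomial.eval_eq_sum_range' (Nat.lt_succ_of_le hf), Finset.mul_sum, Finset.sum_mul]
      simp only [Nat.succ_eq_add_one]
      exact Finset.sum_congr rfl fun r _ => by ring
    simp_rw [h1]
    rw [Finset.sum_comm]
    refine Finset.sum_eq_zero fun r hr => ?_
    rw [← Finset.mul_sum, hcond s r (Nat.lt_succ_iff.mp (Finset.mem_range.mp hr)), mul_zero]
  -- the polynomial
  set P : ℂ[X] := ∑ j : Fin M, Polynomial.C (v j) * X ^ (j.val + 1) with hP
  have hcoeff : ∀ j : Fin M, P.coeff (j.val + 1) = v j := by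
    intro j
    rw [hP, Polynomial.finset_sum_coeff, Finset.sum_eq_single j]
    · simp
    · intro b _ hb
      rw [Polynomial.coeff_C_mul, Polynomial.coeff_X_pow, if_neg, mul_zero]
      intro h
      exact hb (Fin.ext (by omega))
    · simp
  have hPne : P ≠ 0 := by
    intro h0
    apply hv
    funext j
    have := hcoeff j
    rw [h0] at this
    simpa using this.symm
  -- degree bound
  have hdeg : P.natDegree ≤ M := by
    rw [Polynomial.natDegree_le_iff_coeff_eq_zero]
    intro m hm
    rw [hP, Polynomial.finset_sum_coeff]
    refine Finset.sum_eq_zero fun j _ => ?_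
    rw [Polynomial.coeff_C_mul, Polynomial.coeff_X_pow, if_neg (by have := j.isLt; omega),
      mul_zero]
  -- vanishing of iterated derivatives at each `a s`
  have hderiv : ∀ (s : Fin k) (r : ℕ), r ≤ N → (derivative^[r] P).eval (a s) = 0 := by
    intro s r hr
    have hne : (a s) ^ r ≠ 0 := pow_ne_zero r (ha s)
    have hexp : (derivative^[r] P).eval (a s) * a s ^ r =
        ∑ j : Fin M, a s ^ (j.val + 1) *
          (descPochhammer ℂ r).eval (((j.val + 1 : ℕ) : ℂ)) * v j := by
      rw [hP, Polynomial.iterate_derivative_sum]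
      simp_rw [Polynomial.iterate_derivative_C_mul,
        Polynomial.iterate_derivative_X_pow_eq_C_mul, Polynomial.eval_finset_sum,
        Polynomial.eval_mul, Polynomial.eval_C, Polynomial.eval_pow, Polynomial.eval_X]
      rw [Finset.sum_mul]
      refine Finset.sum_congr rfl fun j _ => ?_
      rw [descPochhammer_eval_eq_descFactorial]
      by_cases hrj : r ≤ j.val + 1
      · have hpow : a s ^ (j.val + 1 - r) * a s ^ r = a s ^ (j.val + 1) := by
          rw [← pow_add]; congr 1; omega
        linear_combination (v j * (((j.val + 1).descFactorial r : ℕ) : ℂ)) * hpow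
      · rw [Nat.descFactorial_eq_zero_iff_lt.mpr (by omega)]
        simp
    have h0 := key s (descPochhammer ℂ r) (by rw [descPochhammer_natDegree]; exact hr)
    have := hexp.trans h0
    exact (mul_eq_zero.mp this).resolve_right hne
  -- root multiplicities
  classical
  have hmult : ∀ s : Fin k, N < P.rootMultiplicity (a s) := fun s =>
    Polynomial.lt_rootMultiplicity_of_isRoot_iterate_derivative hPne
      fun m hm => hderiv s m hm
  have h0root : P.IsRoot 0 := by
    rw [hP]
    simp [Polynomial.IsRoot, Polynomial.eval_finset_sum]
  have hmult0 : 0 < P.rootMultiplicity 0 := (Polynomial.rootMultiplicity_pos hPne).2 h0root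
  -- counting roots
  have h0notmem : (0 : ℂ) ∉ Finset.image a Finset.univ := by
    simp only [Finset.mem_image, Finset.mem_univ, true_and, not_exists]
    exact fun s h => ha s h
  set m0 : Multiset ℂ := (N + 1) • (Finset.image a Finset.univ).val + {0} with hm0
  have hle : m0 ≤ P.roots := by
    rw [Multiset.le_iff_count]
    intro x
    rw [hm0, Multiset.count_add, Multiset.count_nsmul, Multiset.count_singleton,
      Polynomial.count_roots]
    by_cases hx0 : x = 0
    · subst hx0
      rw [Multiset.count_eq_zero_of_notMem (fun h => h0notmem (Finset.mem_val.mp h)),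
        if_pos rfl]
      omega
    · rw [if_neg hx0, add_zero]
      by_cases hxa : x ∈ Finset.image a Finset.univ
      · obtain ⟨s, _, rfl⟩ := Finset.mem_image.mp hxa
        rw [Multiset.count_eq_one_of_mem (Finset.image a Finset.univ).nodup
          (Finset.mem_val.mpr hxa)]
        have := hmult s
        omega
      · rw [Multiset.count_eq_zero_of_notMem (fun h => hxa (Finset.mem_val.mp h))]
        omega
  have hcard : Multiset.card m0 = (N + 1) * k + 1 := by
    rw [hm0, Multiset.card_add, Multiset.card_nsmul, Multiset.card_singleton]
    congr 1
    rw [← Finset.card_def, Finset.card_image_of_injective _ hinj]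
    simp
  have hfin := (Multiset.card_le_card hle).trans (P.card_roots'.trans hdeg)
  rw [hcard] at hfin
  have : M = (N + 1) * k := by rw [hM, Nat.mul_comm]
  omega
end

section
/- Let k ≥ 1 and N ≥ 0 be integers and let a_1, …, a_k be distinct nonzero complex numbers. Then the k(N+1) functions f_{i,s} : ℤ → ℂ defined by f_{i,s}(n) = a_i^n · n^s, for 1 ≤ i ≤ k and 0 ≤ s ≤ N, are linearly independent over ℂ; in fact their restrictions to the finite set {1, 2, …, k(N+1)} are already linearly independent. -/
/-!
Sample the sequences `n ↦ a_i ^ n * n ^ s` at `n = 1, …, m` with `m = k(N+1)`; the resulting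
square matrix is invertible. Indeed, a vector `q` in its kernel gives a polynomial
`r = ∑ q_j X ^ (j+1)` with `(θ ^ s r)(a_i) = 0` for all `s ≤ N`, where `θ = X d/dX`.
At a nonzero root, `θ` lowers the multiplicity by exactly one, so every `a_i` is a root of `r`
of order `> N`. Then `∏ (X - a_i) ^ (N+1)`, of degree `k(N+1)`, divides `r / X`, which has
smaller degree, so `r = 0`.
-/

open Polynomial

namespace Polynomial

section CommSemiring

variable {R : Type*} [CommSemiring R]

noncomputable def eulerOperator : R[X] →ₗ[R] R[X] := LinearMap.mulLeft R X ∘ₗ derivative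

theorem eulerOperator_apply (p : R[X]) : eulerOperator p = X * derivative p := rfl

theorem eulerOperator_X_pow (m : ℕ) : eulerOperator (X ^ m : R[X]) = (m : R) • X ^ m := by
  rcases m with _ | m
  · simp [eulerOperator_apply]
  · rw [eulerOperator_apply, derivative_X_pow, smul_eq_C_mul]
    push_cast
    ring

theorem eulerOperator_pow_X_pow (s m : ℕ) :
    (eulerOperator ^ s) (X ^ m : R[X]) = ((m : R) ^ s) • X ^ m := by
  induction s with
  | zero => simp
  | succ s ih =>
    rw [pow_succ', Module.End.mul_apply, ih, map_smul, eulerOperator_X_pow, smul_smul, ← pow_succ]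

theorem eval_eulerOperator_pow_sum {ι : Type*} (t : Finset ι) (c : ι → R) (e : ι → ℕ) (s : ℕ)
    (b : R) :
    ((eulerOperator ^ s) (∑ i ∈ t, C (c i) * X ^ e i)).eval b =
      ∑ i ∈ t, c i * (e i : R) ^ s * b ^ e i := by
  simp only [map_sum, eval_finsetSum]
  refine Finset.sum_congr rfl fun i _ => ?_
  rw [← smul_eq_C_mul, map_smul, eulerOperator_pow_X_pow, smul_smul, eval_smul, eval_pow, eval_X,
    smul_eq_mul]

end CommSemiring

section CharZero

variable {R : Type*} [CommRing R] [IsDomain R] [CharZero R]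

theorem rootMultiplicity_eulerOperator {p : R[X]} {b : R} (hb : b ≠ 0) (hp : p.IsRoot b) :
    (eulerOperator p).rootMultiplicity b = p.rootMultiplicity b - 1 := by
  rw [← derivative_rootMultiplicity_of_root hp, eulerOperator_apply]
  by_cases hd : derivative p = 0
  · simp [hd]
  rw [rootMultiplicity_mul (mul_ne_zero X_ne_zero hd),
    rootMultiplicity_eq_zero (by simpa using hb), zero_add]

theorem eulerOperator_ne_zero {p : R[X]} {b : R} (hp : p ≠ 0) (hb : p.IsRoot b) :
    eulerOperator p ≠ 0 := by
  intro h
  have hd : derivative p = 0 := by simpa [eulerOperator_apply] using h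
  rw [eq_C_of_derivative_eq_zero hd] at hb hp
  simp_all

theorem le_rootMultiplicity_of_isRoot_eulerOperator_pow {p : R[X]} (hp : p ≠ 0) {b : R}
    (hb : b ≠ 0) {n : ℕ} (h : ∀ s < n, ((eulerOperator ^ s) p).IsRoot b) :
    n ≤ p.rootMultiplicity b := by
  induction n generalizing p with
  | zero => exact Nat.zero_le _
  | succ n ih =>
    have hroot : p.IsRoot b := by simpa using h 0 n.succ_pos
    have hθ := ih (eulerOperator_ne_zero hp hroot) fun s hs => by
      simpa [pow_succ, Module.End.mul_apply] using h (s + 1) (by omega)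
    have hpos := (rootMultiplicity_pos hp).2 hroot
    rw [rootMultiplicity_eulerOperator hb hroot] at hθ
    omega

theorem pow_X_sub_C_dvd_of_isRoot_eulerOperator_pow {p : R[X]} {b : R} (hb : b ≠ 0) {n : ℕ}
    (h : ∀ s < n, ((eulerOperator ^ s) p).IsRoot b) : (X - C b) ^ n ∣ p := by
  rcases eq_or_ne p 0 with rfl | hp
  · exact dvd_zero _
  · exact (le_rootMultiplicity_iff hp).1
      (le_rootMultiplicity_of_isRoot_eulerOperator_pow hp hb h)

end CharZero

theorem eq_zero_of_pow_X_sub_C_dvd_X_mul {K ι : Type*} [Field K] [Fintype ι] {a : ι → K}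
    (ha : ∀ i, a i ≠ 0) (hinj : Function.Injective a) {n : ℕ} {p : K[X]}
    (hdeg : p.degree < (Fintype.card ι * n : ℕ)) (hdvd : ∀ i, (X - C (a i)) ^ n ∣ X * p) :
    p = 0 := by
  have hdvd' (i : ι) : (X - C (a i)) ^ n ∣ p := by
    have hcop : IsCoprime (X - C (a i)) (X - C 0) :=
      isCoprime_X_sub_C_of_isUnit_sub (by rw [sub_zero]; exact (ha i).isUnit)
    rw [C_0, sub_zero] at hcop
    exact hcop.pow_left.dvd_of_dvd_mul_left (hdvd i)
  refine eq_zero_of_dvd_of_degree_lt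
    (Fintype.prod_dvd_of_coprime (fun _ _ hij => (pairwise_coprime_X_sub_C hinj hij).pow) hdvd') ?_
  rw [degree_prod_of_monic _ _ fun i _ => (monic_X_sub_C (a i)).pow n]
  simpa [mul_comm] using hdeg

end Polynomial

theorem Matrix.linearIndependent_row_of_mulVec_injective {K m n : Type*} [Field K] [Fintype m]
    [Fintype n] {M : Matrix m n K} (hcard : Fintype.card m = Fintype.card n)
    (h : Function.Injective M.mulVec) : LinearIndependent K M.row := by
  rw [linearIndependent_iff_card_eq_finrank_span, Set.finrank, ← M.rank_eq_finrank_span_row,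
    Matrix.rank, LinearMap.finrank_range_of_inj h, Module.finrank_fintype_fun_eq_card, hcard]

section ExpPoly

variable {K ι : Type*}

/-- Row `(i, s)` is the sequence `n ↦ a i ^ n * n ^ s` sampled at `n = j + 1` for `j < m`. -/
def expPolyMatrix [CommSemiring K] (a : ι → K) (N m : ℕ) : Matrix (ι × Fin (N + 1)) (Fin m) K :=
  Matrix.of fun p j => a p.1 ^ ((j : ℕ) + 1) * (((j : ℕ) + 1 : ℕ) : K) ^ (p.2 : ℕ)

theorem expPolyMatrix_mulVec_injective [Field K] [CharZero K] [Fintype ι] {a : ι → K}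
    (ha : ∀ i, a i ≠ 0) (hinj : Function.Injective a) {N m : ℕ}
    (hm : m ≤ Fintype.card ι * (N + 1)) : Function.Injective (expPolyMatrix a N m).mulVec := by
  refine (injective_iff_map_eq_zero (expPolyMatrix a N m).mulVecLin).2 fun q hq => ?_
  set p : K[X] := ∑ j : Fin m, C (q j) * X ^ (j : ℕ)
  have hXp : X * p = ∑ j : Fin m, C (q j) * X ^ ((j : ℕ) + 1) := by
    simp only [p, Finset.mul_sum]
    exact Finset.sum_congr rfl fun j _ => by ring
  have hdvd (i : ι) : (X - C (a i)) ^ (N + 1) ∣ X * p :=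
    pow_X_sub_C_dvd_of_isRoot_eulerOperator_pow (ha i) fun s hs => by
      have := congrFun hq (i, ⟨s, hs⟩)
      rw [IsRoot, hXp, eval_eulerOperator_pow_sum]
      simpa [Matrix.mulVec, dotProduct, expPolyMatrix, mul_comm, mul_left_comm, mul_assoc]
        using this
  have hp : p = 0 := eq_zero_of_pow_X_sub_C_dvd_X_mul ha hinj
    ((degree_sum_fin_lt q).trans_le (by exact_mod_cast hm)) hdvd
  funext j
  simpa [p, finsetSum_coeff, coeff_C_mul_X_pow, Fin.val_inj] using congrArg (coeff · j) hp

end ExpPoly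

theorem exponential_polynomials_linearIndependent_general
    (k N : ℕ) (a : Fin k → ℂ)
    (ha : ∀ i, a i ≠ 0) (hinj : Function.Injective a) :
    LinearIndependent ℂ
      (fun p : Fin k × Fin (N + 1) => fun n : ℤ =>
        (a p.1) ^ n * (n : ℂ) ^ (p.2 : ℕ)) ∧
    LinearIndependent ℂ
      (fun p : Fin k × Fin (N + 1) => fun j : Fin (k * (N + 1)) =>
        (a p.1) ^ ((j.val : ℤ) + 1) * ((j.val + 1 : ℕ) : ℂ) ^ (p.2 : ℕ)) := by
  refine (and_iff_right_of_imp fun hfin => ?_).2 ?_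
  · refine .of_comp (LinearMap.funLeft ℂ ℂ fun j : Fin (k * (N + 1)) => (j : ℤ) + 1) ?_
    convert hfin using 3
    simp [LinearMap.funLeft_apply]
  · have hrows := Matrix.linearIndependent_row_of_mulVec_injective (by simp)
      (expPolyMatrix_mulVec_injective ha hinj (N := N) (m := k * (N + 1)) (by simp))
    simp only [← Nat.cast_add_one, zpow_natCast]
    exact hrows

/-- For distinct nonzero complex numbers `a 1, …, a k` and `N ≥ 0`, the `k(N+1)`
functions `f_{i,s} : ℤ → ℂ`, `f_{i,s}(n) = a_i ^ n * n ^ s` (`1 ≤ i ≤ k`,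
`0 ≤ s ≤ N`), are linearly independent over `ℂ`; in fact their restrictions to
the finite set `{1, 2, …, k(N+1)}` (modelled by `Fin (k*(N+1))`, where
`j : Fin (k*(N+1))` stands for the integer `j+1`) are already linearly
independent. -/
theorem exponential_polynomials_linearIndependent
    (k N : ℕ) (hk : 0 < k) (a : Fin k → ℂ)
    (ha : ∀ i, a i ≠ 0) (hinj : Function.Injective a) :
    LinearIndependent ℂ
      (fun p : Fin k × Fin (N + 1) => fun n : ℤ =>
        (a p.1) ^ n * (n : ℂ) ^ (p.2 : ℕ)) ∧
    LinearIndependent ℂ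
      (fun p : Fin k × Fin (N + 1) => fun j : Fin (k * (N + 1)) =>
        (a p.1) ^ ((j.val : ℤ) + 1) * ((j.val + 1 : ℕ) : ℂ) ^ (p.2 : ℕ)) :=
  exponential_polynomials_linearIndependent_general k N a ha hinj
end

section
/- Let V be a complex vector space, let r ≥ 1 be an integer, let ε be a primitive r-th root of unity, let a_1, …, a_k be distinct nonzero complex numbers, and let λ_1, …, λ_k be nonzero vectors in V. Assume that Σ_{i=1}^{k} a_i^n · λ_i = 0 for every integer n that is not divisible by r. Then there exists a permutation π of {1, …, k} such that a_{π(i)} = ε · a_i and λ_{π(i)} = λ_i for all i. -/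
/-!
For `n ≥ 0` the sums `Σ (ε a_i)^n λ_i = ε^n Σ a_i^n λ_i` and `Σ a_i^n λ_i` agree: both vanish when
`r ∤ n`, and `ε^n = 1` when `r ∣ n`. Since the characters `n ↦ b^n` of `ℕ` are linearly
independent (Artin), the finitely supported `V`-valued functions `Σ λ_i δ_{ε a_i}` and
`Σ λ_i δ_{a_i}` coincide, and matching their values at the points `ε a_i` gives the permutation.
-/

theorem Finsupp.sum_pow_smul_injective {R V : Type*} [CommRing R] [IsDomain R] [AddCommGroup V]
    [Module R V] [Module.Projective R V] :
    Function.Injective fun (F : R →₀ V) (n : ℕ) => F.sum fun b v => b ^ n • v := by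
  intro F G hFG
  have hpow : LinearIndependent R fun (b : R) (n : Multiplicative ℕ) => b ^ n.toAdd :=
    (linearIndependent_monoidHom (Multiplicative ℕ) R).comp _ (powersHom R).injective
  ext b
  rw [← sub_eq_zero, ← Module.forall_dual_apply_eq_zero_iff R]
  intro φ
  have hφ : F.mapRange φ φ.map_zero = G.mapRange φ φ.map_zero := by
    refine hpow.finsuppLinearCombination_injective (funext fun n => ?_)
    have := congrArg φ (congrFun hFG n.toAdd)
    simpa [Finsupp.linearCombination_apply, Finsupp.sum_apply', Finsupp.sum_mapRange_index,
      map_finsuppSum, mul_comm] using this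
  simpa [sub_eq_zero] using DFunLike.congr_fun hφ b

theorem Finsupp.sum_mapDomain_pow_smul {ι R V : Type*} [Fintype ι] [Semiring R] [AddCommMonoid V]
    [Module R V] (f : ι → R) (u : ι →₀ V) (n : ℕ) :
    (u.mapDomain f).sum (fun b v => b ^ n • v) = ∑ i, f i ^ n • u i := by
  rw [sum_mapDomain_index (fun _ => smul_zero _) (fun _ => smul_add _), sum_fintype _ _ (by simp)]

theorem Finsupp.exists_perm_of_mapDomain_eq {ι α M : Type*} [Finite ι] [AddCommMonoid M]
    {f g : ι → α} (hf : f.Injective) (hg : g.Injective) {u : ι →₀ M} (hu : ∀ i, u i ≠ 0)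
    (h : u.mapDomain f = u.mapDomain g) :
    ∃ π : Equiv.Perm ι, ∀ i, g (π i) = f i ∧ u (π i) = u i := by
  have hmatch : ∀ i, ∃ j, g j = f i ∧ u j = u i := by
    intro i
    have hfi : u.mapDomain g (f i) = u i := by rw [← h, mapDomain_apply hf]
    obtain ⟨j, hj⟩ : f i ∈ Set.range g := by
      by_contra hi
      exact hu i (hfi ▸ mapDomain_of_notMem_range u _ hi)
    rw [← hj, mapDomain_apply hg] at hfi
    exact ⟨j, hj, hfi⟩
  choose σ hσf hσu using hmatch
  have hσ : σ.Injective := fun i i' hii' => hf (by rw [← hσf, ← hσf, hii'])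
  exact ⟨Equiv.ofBijective σ hσ.bijective_of_finite, fun i => ⟨hσf i, hσu i⟩⟩

theorem Fintype.sum_mul_pow_smul_eq_of_pow_eq_one {ι R V : Type*} [Fintype ι] [CommSemiring R]
    [AddCommMonoid V] [Module R V] {r : ℕ} {ε : R} (hε : ε ^ r = 1) {a : ι → R} {lam : ι → V}
    (h : ∀ n, ¬ r ∣ n → ∑ i, a i ^ n • lam i = 0) (n : ℕ) :
    ∑ i, (ε * a i) ^ n • lam i = ∑ i, a i ^ n • lam i := by
  simp only [mul_pow, ← smul_smul, ← Finset.smul_sum]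
  by_cases hn : r ∣ n
  · obtain ⟨m, rfl⟩ := hn
    rw [pow_mul, hε, one_pow, one_smul]
  · rw [h n hn, smul_zero]

theorem exponential_sum_root_of_unity_symmetry_general
    (V : Type*) [AddCommGroup V] [Module ℂ V]
    (r : ℕ) (hr : 1 ≤ r) (ε : ℂ) (hε : IsPrimitiveRoot ε r)
    (k : ℕ) (a : Fin k → ℂ)
    (hainj : Function.Injective a)
    (lam : Fin k → V) (hlam : ∀ i, lam i ≠ 0)
    (h : ∀ n : ℤ, ¬ (r : ℤ) ∣ n → ∑ i : Fin k, (a i) ^ n • lam i = 0) :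
    ∃ π : Equiv.Perm (Fin k), ∀ i, a (π i) = ε * a i ∧ lam (π i) = lam i := by
  have hε0 : ε ≠ 0 := hε.ne_zero (by omega)
  have hsum : ∀ n : ℕ, ∑ i, (ε * a i) ^ n • lam i = ∑ i, a i ^ n • lam i :=
    Fintype.sum_mul_pow_smul_eq_of_pow_eq_one hε.pow_eq_one fun n hn => by
      exact_mod_cast h n (by exact_mod_cast hn)
  let u := Finsupp.equivFunOnFinite.symm lam
  have hu : u.mapDomain (fun i => ε * a i) = u.mapDomain a :=
    Finsupp.sum_pow_smul_injective <| funext fun n => by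
      simpa only [Finsupp.sum_mapDomain_pow_smul, u, Finsupp.coe_equivFunOnFinite_symm]
        using hsum n
  exact Finsupp.exists_perm_of_mapDomain_eq ((mul_right_injective₀ hε0).comp hainj) hainj hlam hu

/-- Core step of Lemma 4.3: if `ε` is a primitive `r`-th root of unity,
`a 1, …, a k` are distinct nonzero complex numbers, `lam 1, …, lam k` are
nonzero vectors of a complex vector space, and `Σ_i a_i^n • lam_i = 0` for
every integer `n` not divisible by `r`, then there is a permutation `π` of
`{1, …, k}` with `a_{π(i)} = ε · a_i` and `lam_{π(i)} = lam_i` for all `i`. -/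
theorem exponential_sum_root_of_unity_symmetry
    (V : Type*) [AddCommGroup V] [Module ℂ V]
    (r : ℕ) (hr : 1 ≤ r) (ε : ℂ) (hε : IsPrimitiveRoot ε r)
    (k : ℕ) (a : Fin k → ℂ)
    (ha : ∀ i, a i ≠ 0) (hainj : Function.Injective a)
    (lam : Fin k → V) (hlam : ∀ i, lam i ≠ 0)
    (h : ∀ n : ℤ, ¬ (r : ℤ) ∣ n → ∑ i : Fin k, (a i) ^ n • lam i = 0) :
    ∃ π : Equiv.Perm (Fin k), ∀ i, a (π i) = ε * a i ∧ lam (π i) = lam i :=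
  exponential_sum_root_of_unity_symmetry_general V r hr ε hε k a hainj lam hlam h
end

section
/- Let V be a complex vector space, let r ≥ 1 be an integer, let ε be a primitive r-th root of unity, let a_1, …, a_k be distinct nonzero complex numbers, and let λ_1, …, λ_k be nonzero vectors in V. Assume that Σ_{i=1}^{k} a_i^n · λ_i = 0 for every integer n that is not divisible by r. Then r divides k, and, setting p = k/r, there exist a permutation τ of {1, …, k} and nonzero complex numbers a_{(0)}, …, a_{(p−1)} such that for every s = 0, 1, …, p−1 one has λ_{τ(sr+1)} = λ_{τ(sr+2)} = … = λ_{τ((s+1)r)} and a_{τ(sr+j)} = ε^j · a_{(s)} for j = 1, …, r. -/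
/-- The index `sr + j` (with `0 ≤ s < k/r`, `1 ≤ j ≤ r`; here `t = j - 1`),
as an element of `Fin k`, assuming `r ∣ k` is not even needed since
`(k/r)·r ≤ k`. -/
def blockIndex {k r : ℕ} (s : Fin (k / r)) (t : Fin r) : Fin k :=
  ⟨s.val * r + t.val, by
    have hs : s.val + 1 ≤ k / r := s.isLt
    have ht : t.val < r := t.isLt
    have h1 : s.val * r + t.val < s.val * r + r := Nat.add_lt_add_left ht _
    have h2 : s.val * r + r = (s.val + 1) * r := by ring
    have h3 : (s.val + 1) * r ≤ (k / r) * r := Nat.mul_le_mul_right r hs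
    have h4 : (k / r) * r ≤ k := Nat.div_mul_le_self k r
    exact lt_of_lt_of_le (h2 ▸ h1) (h3.trans h4)⟩

open Matrix in
lemma vanish {V : Type*} [AddCommGroup V] [Module ℂ V]
    {ι : Type*} [Fintype ι] (c : ι → ℂ) (hcinj : Function.Injective c)
    (v : ι → V) (H : ∀ n : ℕ, ∑ i, c i ^ n • v i = 0) : ∀ j, v j = 0 := by
  suffices hfin : ∀ (m : ℕ) (c : Fin m → ℂ), Function.Injective c →
      ∀ v : Fin m → V, (∀ n : ℕ, ∑ i, c i ^ n • v i = 0) → ∀ j, v j = 0 by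
    intro j
    let e := Fintype.equivFin ι
    have := hfin _ (c ∘ e.symm) (hcinj.comp e.symm.injective) (v ∘ e.symm)
      (fun n => by
        rw [Fintype.sum_equiv e.symm (fun i => (c ∘ e.symm) i ^ n • (v ∘ e.symm) i)
          (fun i => c i ^ n • v i) (fun i => by simp)]
        exact H n) (e j)
    simpa using this
  intro m c hcinj v H j
  set M : Matrix (Fin m) (Fin m) ℂ := (Matrix.vandermonde c)ᵀ with hM
  have hdet : IsUnit M.det := by
    rw [hM, Matrix.det_transpose]
    exact isUnit_iff_ne_zero.2 (Matrix.det_vandermonde_ne_zero_iff.2 hcinj)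
  have hinv : M⁻¹ * M = 1 := Matrix.nonsing_inv_mul M hdet
  have key : ∀ n, ∑ i, M n i • v i = 0 := by
    intro n
    simpa [hM, Matrix.vandermonde, Matrix.transpose_apply] using H n
  calc v j = ∑ i, (1 : Matrix (Fin m) (Fin m) ℂ) j i • v i := by
        simp [Matrix.one_apply, ite_smul]
    _ = ∑ i, (∑ n, M⁻¹ j n * M n i) • v i := by rw [← hinv]; simp [Matrix.mul_apply]
    _ = ∑ n, M⁻¹ j n • ∑ i, M n i • v i := by
        simp only [Finset.sum_smul, Finset.smul_sum, mul_smul]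
        exact Finset.sum_comm
    _ = 0 := by simp [key]

lemma claim1 {V : Type*} [AddCommGroup V] [Module ℂ V]
    (r : ℕ) (hr : 1 ≤ r) (ε : ℂ) (hε : IsPrimitiveRoot ε r)
    (k : ℕ) (a : Fin k → ℂ)
    (ha : ∀ i, a i ≠ 0) (hainj : Function.Injective a)
    (lam : Fin k → V) (hlam : ∀ i, lam i ≠ 0)
    (h : ∀ n : ℤ, ¬ (r : ℤ) ∣ n → ∑ i : Fin k, (a i) ^ n • lam i = 0) :
    ∀ (i : Fin k) (m : ℕ), ∃ j, a j = ε ^ m * a i ∧ lam j = lam i := by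
  classical
  haveI : NeZero r := ⟨by omega⟩
  have hε1 : ε ^ r = 1 := hε.pow_eq_one
  have hεne : ε ≠ 0 := by
    intro h0; rw [h0, zero_pow (by omega)] at hε1; exact one_ne_zero hε1.symm
  have hεpne : ∀ m : ℕ, ε ^ m ≠ 0 := fun m => pow_ne_zero m hεne
  have hrC : (r : ℂ) ≠ 0 := Nat.cast_ne_zero.2 (by omega)
  have hmod : ∀ n : ℕ, ε ^ (n % r) = ε ^ n := by
    intro n
    conv_rhs => rw [← Nat.mod_add_div n r]
    rw [pow_add, pow_mul, hε1, one_pow, mul_one]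
  set f : Fin k × Fin r → ℂ := fun p => ε ^ (p.2 : ℕ) * a p.1 with hf
  set B : Finset ℂ := Finset.image f Finset.univ with hB
  set S2 : ℂ → V := fun b => ∑ p ∈ Finset.univ.filter (fun p : Fin k × Fin r => f p = b), lam p.1
    with hS2
  set w : ℂ → V := fun b =>
    (∑ j ∈ Finset.univ.filter (fun j => a j = b), lam j) - (r : ℂ)⁻¹ • S2 b with hw
  have hmem : ∀ i, a i ∈ B := fun i => Finset.mem_image.2
    ⟨(i, ⟨0, by omega⟩), Finset.mem_univ _, by simp [hf]⟩
  have key : ∀ n : ℤ, ∑ b ∈ B, b ^ n • w b = 0 := by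
    intro n
    have e1 : ∑ b ∈ B, b ^ n • (∑ j ∈ Finset.univ.filter (fun j => a j = b), lam j)
        = ∑ j, a j ^ n • lam j := by
      rw [← Finset.sum_fiberwise_of_maps_to (fun j _ => hmem j) (fun j => a j ^ n • lam j)]
      refine Finset.sum_congr rfl fun b _ => ?_
      rw [Finset.smul_sum]
      refine Finset.sum_congr rfl fun j hj => ?_
      rw [(Finset.mem_filter.1 hj).2]
    have e2 : ∑ b ∈ B, b ^ n • S2 b = ∑ p : Fin k × Fin r, f p ^ n • lam p.1 := by
      simp only [hS2]
      rw [← Finset.sum_fiberwise_of_maps_to (t := B) (g := f)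
        (fun p _ => Finset.mem_image.2 ⟨p, Finset.mem_univ _, rfl⟩)
        (fun p : Fin k × Fin r => f p ^ n • lam p.1)]
      refine Finset.sum_congr rfl fun b _ => ?_
      rw [Finset.smul_sum]
      refine Finset.sum_congr rfl fun p hp => ?_
      rw [(Finset.mem_filter.1 hp).2]
    set G : ℂ := ∑ m : Fin r, (ε ^ n) ^ (m : ℕ) with hG
    have e3 : ∑ p : Fin k × Fin r, f p ^ n • lam p.1 = G • ∑ i, a i ^ n • lam i := by
      rw [Fintype.sum_prod_type, Finset.smul_sum]
      refine Finset.sum_congr rfl fun i _ => ?_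
      have : ∀ m : Fin r, f (i, m) ^ n • lam i = (ε ^ n) ^ (m : ℕ) • (a i ^ n • lam i) := by
        intro m
        have hpow : f (i, m) ^ n = (ε ^ n) ^ (m : ℕ) * a i ^ n := by
          rw [hf]
          rw [mul_zpow, ← zpow_natCast ε (m : ℕ), ← zpow_mul, mul_comm ((m : ℕ) : ℤ) n,
            zpow_mul, zpow_natCast]
        rw [hpow, mul_smul]
      rw [Finset.sum_congr rfl fun m _ => this m, ← Finset.sum_smul]
    have main : ∑ b ∈ B, b ^ n • w b
        = (∑ j, a j ^ n • lam j) - (r : ℂ)⁻¹ • (G • ∑ i, a i ^ n • lam i) := by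
      simp only [hw, smul_sub, Finset.sum_sub_distrib, e1]
      congr 1
      rw [← e3, ← e2, Finset.smul_sum]
      exact Finset.sum_congr rfl fun b _ => (smul_comm _ _ _)
    by_cases hdvd : (r : ℤ) ∣ n
    · have hεn : ε ^ n = 1 := (hε.zpow_eq_one_iff_dvd n).2 hdvd
      have hGr : G = (r : ℂ) := by simp [hG, hεn]
      rw [main, hGr, smul_smul, inv_mul_cancel₀ hrC, one_smul, sub_self]
    · have h1 : ∑ j, a j ^ n • lam j = 0 := h n hdvd
      have hεn : ε ^ n ≠ 1 := fun e => hdvd ((hε.zpow_eq_one_iff_dvd n).1 e)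
      have hxr : (ε ^ n) ^ r = 1 := by
        rw [← zpow_natCast (ε ^ n) r, ← zpow_mul, mul_comm, zpow_mul, zpow_natCast, hε1, one_zpow]
      have hGr : G = 0 := by
        rw [hG, Fin.sum_univ_eq_sum_range, geom_sum_eq hεn, hxr, sub_self, zero_div]
      rw [main, h1, hGr, smul_zero, smul_zero, sub_zero]
  have hw0 : ∀ b ∈ B, w b = 0 := by
    intro b hb
    have := vanish (fun x : {x // x ∈ B} => (x : ℂ)) Subtype.val_injective
      (fun x => w x)
      (fun n => by
        have hk := key (n : ℤ)
        rw [← Finset.sum_attach B (fun b => b ^ (n : ℤ) • w b)] at hk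
        simpa [zpow_natCast] using hk)
    exact this ⟨b, hb⟩
  have heq : ∀ b ∈ B, ∑ j ∈ Finset.univ.filter (fun j => a j = b), lam j = (r : ℂ)⁻¹ • S2 b :=
    fun b hb => sub_eq_zero.1 (hw0 b hb)
  intro i m
  have hsingle : Finset.univ.filter (fun j => a j = a i) = {i} := by
    ext j
    simp [hainj.eq_iff]
  have base : lam i = (r : ℂ)⁻¹ • S2 (a i) := by
    have := heq (a i) (hmem i)
    rwa [hsingle, Finset.sum_singleton] at this
  set m' : Fin r := ⟨m % r, Nat.mod_lt _ (by omega)⟩ with hm'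
  have hεm : ε ^ (m' : ℕ) = ε ^ m := hmod m
  set b : ℂ := ε ^ m * a i with hb
  have hbB : b ∈ B := Finset.mem_image.2 ⟨(i, m'), Finset.mem_univ _, by rw [hf]; simp [hεm, hb]⟩
  have shift : S2 b = S2 (a i) := by
    rw [hS2]
    refine (Finset.sum_equiv (Equiv.prodCongr (Equiv.refl (Fin k)) (Equiv.addRight m'))
      (fun p => ?_) (fun p _ => rfl)).symm
    obtain ⟨p1, p2⟩ := p
    simp only [Finset.mem_filter, Finset.mem_univ, true_and, Equiv.prodCongr_apply,
      Equiv.coe_refl, Prod.map_apply, id_eq, Equiv.coe_addRight]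
    have hfe : f (p1, p2 + m') = ε ^ m * f (p1, p2) := by
      rw [hf]
      simp only
      rw [Fin.add_def]
      simp only
      rw [hmod, pow_add, ← hεm]
      ring
    constructor
    · intro hp; rw [hfe, hp, hb]
    · intro hp
      rw [hfe, hb] at hp
      exact mul_left_cancel₀ (hεpne m) hp

  have hsum : ∑ j ∈ Finset.univ.filter (fun j => a j = b), lam j = lam i := by
    rw [heq b hbB, shift, ← base]
  have hne : ∑ j ∈ Finset.univ.filter (fun j => a j = b), lam j ≠ 0 := by
    rw [hsum]; exact hlam i
  obtain ⟨j, hjmem, -⟩ := Finset.exists_ne_zero_of_sum_ne_zero hne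
  have hja : a j = b := (Finset.mem_filter.1 hjmem).2
  have hjsingle : Finset.univ.filter (fun x => a x = b) = {j} := by
    ext x
    simp only [Finset.mem_filter, Finset.mem_univ, true_and, Finset.mem_singleton]
    rw [← hja, hainj.eq_iff]
  rw [hjsingle, Finset.sum_singleton] at hsum
  exact ⟨j, hja, hsum⟩


/-- Lemma 4.3: if `ε` is a primitive `r`-th root of unity, `a 1, …, a k` are
distinct nonzero complex numbers, `lam 1, …, lam k` are nonzero vectors of a
complex vector space, and `Σ_i a_i^n • lam_i = 0` for every integer `n` not
divisible by `r`, then `r ∣ k` and, with `p = k/r`, there are a permutation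
`τ` of `{1, …, k}` and nonzero complex numbers `a_{(0)}, …, a_{(p-1)}` such
that for each `s`, `lam_{τ(sr+1)} = ⋯ = lam_{τ((s+1)r)}` and
`a_{τ(sr+j)} = ε^j · a_{(s)}` for `j = 1, …, r`.  (Here `blockIndex s t`
encodes the index `sr + j` with `j = t + 1`.) -/
theorem exponential_sum_block_structure
    (V : Type*) [AddCommGroup V] [Module ℂ V]
    (r : ℕ) (hr : 1 ≤ r) (ε : ℂ) (hε : IsPrimitiveRoot ε r)
    (k : ℕ) (a : Fin k → ℂ)
    (ha : ∀ i, a i ≠ 0) (hainj : Function.Injective a)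
    (lam : Fin k → V) (hlam : ∀ i, lam i ≠ 0)
    (h : ∀ n : ℤ, ¬ (r : ℤ) ∣ n → ∑ i : Fin k, (a i) ^ n • lam i = 0) :
    r ∣ k ∧
    ∃ (τ : Equiv.Perm (Fin k)) (c : Fin (k / r) → ℂ),
      (∀ s, c s ≠ 0) ∧
      (∀ (s : Fin (k / r)) (t t' : Fin r),
        lam (τ (blockIndex s t)) = lam (τ (blockIndex s t'))) ∧
      (∀ (s : Fin (k / r)) (t : Fin r),
        a (τ (blockIndex s t)) = ε ^ (t.val + 1) * c s) := by
  classical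
  have hε1 : ε ^ r = 1 := hε.pow_eq_one
  have hεne : ε ≠ 0 := by
    intro h0; rw [h0, zero_pow (by omega)] at hε1; exact one_ne_zero hε1.symm
  have hmod : ∀ n : ℕ, ε ^ (n % r) = ε ^ n := by
    intro n
    conv_rhs => rw [← Nat.mod_add_div n r]
    rw [pow_add, pow_mul, hε1, one_pow, mul_one]
  obtain ⟨σ, hσa, hσlam⟩ :
      ∃ σ : Fin k → ℕ → Fin k, (∀ i m, a (σ i m) = ε ^ m * a i) ∧
        (∀ i m, lam (σ i m) = lam i) := by
    choose σ h1 h2 using claim1 r hr ε hε k a ha hainj lam hlam h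
    exact ⟨σ, h1, h2⟩
  have huniq : ∀ (i : Fin k) (m : ℕ) (j : Fin k), a j = ε ^ m * a i → j = σ i m :=
    fun i m j hj => hainj (hj.trans (hσa i m).symm)
  set R : Fin k → Fin k → Prop := fun i j => ∃ m : ℕ, a j = ε ^ m * a i with hR
  have hrefl : ∀ i, R i i := fun i => ⟨0, by simp⟩
  have hsymm : ∀ {i j}, R i j → R j i := by
    rintro i j ⟨m, hm⟩
    refine ⟨r - m % r, ?_⟩
    rw [hm, ← mul_assoc, ← pow_add]
    have hexp : r - m % r + m = r * (m / r + 1) := by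
      have h2 := Nat.div_add_mod m r
      have h1 : m % r < r := Nat.mod_lt _ (by omega)
      rw [Nat.mul_add, Nat.mul_one]
      generalize r * (m / r) = y at h2 ⊢
      omega
    rw [hexp, pow_mul, hε1, one_pow, one_mul]
  have htrans : ∀ {i j l}, R i j → R j l → R i l := by
    rintro i j l ⟨m, hm⟩ ⟨m', hm'⟩
    exact ⟨m' + m, by rw [hm', hm, pow_add]; ring⟩
  set st : Setoid (Fin k) := ⟨R, hrefl, hsymm, htrans⟩ with hst
  have hfibercard : ∀ x : Quotient st,
      (Finset.univ.filter (fun i => Quotient.mk st i = x)).card = r := by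
    intro x
    obtain ⟨i₀, rfl⟩ := Quotient.exists_rep x
    have hinj_t : Function.Injective (fun t : Fin r => σ i₀ t.val) := by
      intro t t' htt
      have h1 : a (σ i₀ t.val) = a (σ i₀ t'.val) := congrArg a htt
      rw [hσa, hσa] at h1
      have h2 : ε ^ t.val = ε ^ t'.val := mul_right_cancel₀ (ha i₀) h1
      exact Fin.ext (hε.pow_inj t.isLt t'.isLt h2)
    have himg : Finset.univ.filter (fun i => Quotient.mk st i = Quotient.mk st i₀)
        = Finset.image (fun t : Fin r => σ i₀ t.val) Finset.univ := by
      ext j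
      simp only [Finset.mem_filter, Finset.mem_univ, true_and, Finset.mem_image]
      constructor
      · intro hj
        obtain ⟨m, hm⟩ : R i₀ j := hsymm (Quotient.exact hj)
        exact ⟨⟨m % r, Nat.mod_lt _ (by omega)⟩,
          (huniq i₀ (m % r) j (by rw [hmod]; exact hm)).symm⟩
      · rintro ⟨t, rfl⟩
        exact Quotient.sound (hsymm ⟨t.val, hσa i₀ t.val⟩)
    rw [himg, Finset.card_image_of_injective _ hinj_t, Finset.card_univ, Fintype.card_fin]
  have hk : k = Fintype.card (Quotient st) * r := by
    have hcards := Finset.card_eq_sum_card_fiberwise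
      (f := fun i => Quotient.mk st i) (s := Finset.univ) (t := Finset.univ)
      (fun i _ => Finset.mem_univ _)
    rw [Finset.card_univ, Fintype.card_fin] at hcards
    refine hcards.trans ?_
    refine (Finset.sum_congr rfl (fun x _ => hfibercard x)).trans ?_
    rw [Finset.sum_const, Finset.card_univ, smul_eq_mul]
  have hdvd : r ∣ k := ⟨Fintype.card (Quotient st), hk.trans (Nat.mul_comm _ _)⟩
  have hcardQ : Fintype.card (Quotient st) = k / r := by
    have h1 : k / r = Fintype.card (Quotient st) := by
      conv_lhs => rw [hk]
      exact Nat.mul_div_cancel _ (by omega)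
    exact h1.symm
  let e : Fin (k / r) ≃ Quotient st := (Fintype.equivFinOfCardEq hcardQ).symm
  let F : Fin (k / r) × Fin r → Fin k := fun p => σ (e p.1).out (p.2.val + 1)
  have hFa : ∀ p : Fin (k / r) × Fin r, a (F p) = ε ^ (p.2.val + 1) * a ((e p.1).out) :=
    fun p => hσa _ _
  have hFlam : ∀ p : Fin (k / r) × Fin r, lam (F p) = lam ((e p.1).out) :=
    fun p => hσlam _ _
  have hFq : ∀ p : Fin (k / r) × Fin r, Quotient.mk st (F p) = e p.1 := by
    intro p
    have h1 : Quotient.mk st (F p) = Quotient.mk st ((e p.1).out) :=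
      Quotient.sound (hsymm ⟨p.2.val + 1, hσa _ _⟩)
    rw [h1, Quotient.out_eq]
  have hFinj : Function.Injective F := by
    rintro ⟨s, t⟩ ⟨s', t'⟩ hF
    have hs : s = s' := e.injective (by rw [← hFq (s, t), ← hFq (s', t'), hF])
    subst hs
    have hεeq : ε ^ (t.val + 1) = ε ^ (t'.val + 1) := by
      have h1 : a (F (s, t)) = a (F (s, t')) := by rw [hF]
      rw [hFa, hFa] at h1
      exact mul_right_cancel₀ (ha _) h1
    have hεeq' : ε ^ t.val = ε ^ t'.val := by
      rw [pow_succ, pow_succ] at hεeq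
      exact mul_right_cancel₀ hεne hεeq
    have : t.val = t'.val := hε.pow_inj t.isLt t'.isLt hεeq'
    exact Prod.ext rfl (Fin.ext this)
  have hcardeq : Fintype.card (Fin (k / r) × Fin r) = Fintype.card (Fin k) := by
    simp [Nat.div_mul_cancel hdvd]
  have hFbij : Function.Bijective F :=
    (Fintype.bijective_iff_injective_and_card F).2 ⟨hFinj, hcardeq⟩
  let EF : (Fin (k / r) × Fin r) ≃ Fin k := Equiv.ofBijective F hFbij
  have hkk : k = (k / r) * r := (Nat.div_mul_cancel hdvd).symm
  let τ : Equiv.Perm (Fin k) := (finCongr hkk).trans (finProdFinEquiv.symm.trans EF)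
  have hτ : ∀ (s : Fin (k / r)) (t : Fin r), τ (blockIndex s t) = F (s, t) := by
    intro s t
    show EF (finProdFinEquiv.symm (finCongr hkk (blockIndex s t))) = F (s, t)
    have heqv : finProdFinEquiv.symm (finCongr hkk (blockIndex s t)) = (s, t) := by
      rw [Equiv.symm_apply_eq]
      apply Fin.ext
      simp [finProdFinEquiv, blockIndex, finCongr]
      ring
    rw [heqv]
    rfl
  refine ⟨hdvd, τ, fun s => a ((e s).out), fun s => ha _, ?_, ?_⟩
  · intro s t t'
    rw [hτ, hτ, hFlam, hFlam]
  · intro s t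
    rw [hτ]
    exact hFa (s, t)
end
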